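/- Let f be a signature of arity n whose support is an affine subspace of ℤ₂ⁿ of dimension k ≥ 4. If for every i ∈ {1,…,n} both restrictions f^{xᵢ=0} and f^{xᵢ=1} are affine, then f is affine. -/

import Mathlib

/-!
Choose `k` coordinates on which the support `x₀ + V` projects bijectively. Pulling `f` back along
the resulting affine parametrisation gives a nowhere-vanishing signature `g` on `ℤ₂ᵏ` whose
pinnings are again affine. A nowhere-vanishing affine signature carries no indicator, so
`g = g 0 · 𝔦^P`, and every pinning of `P : ℤ₂ᵏ → ℤ₄` is a quadratic phase up to a constant.
Quadratic phases have even second and vanishing third finite differences. Since `k ≥ 4`, each such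
difference of `P` in coordinate directions lives inside the pinning of a further coordinate, so `P`
inherits them; this forces `P x = P (0, x') + x 0 · D x'` with `D` affine of even linear part,
which is a quadratic phase.
-/

/-- `𝔦^r` for `r ∈ ℤ₄`; well defined since `𝔦⁴ = 1`. -/
noncomputable def iPow (r : ZMod 4) : ℂ := Complex.I ^ r.val

/-- View `0, 1 ∈ ℤ₂` as elements of `ℤ₄`. -/
def z2z4 (a : ZMod 2) : ZMod 4 := (a.val : ZMod 4)

/-- Evaluation at a `{0,1}`-point of the multilinear polynomial over `ℤ₄` whose
coefficient on the monomial `∏_{i ∈ S} xᵢ` is `c S`. -/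
def evalML4 {ι : Type*} [Fintype ι] [DecidableEq ι]
    (c : Finset ι → ZMod 4) (x : ι → ZMod 2) : ZMod 4 :=
  ∑ S : Finset ι, c S * ∏ i ∈ S, z2z4 (x i)

/-- `x` extended by a final coordinate `1` (at `none`). -/
def extend1 {ι : Type*} (x : ι → ZMod 2) : Option ι → ZMod 2 := fun o => o.elim 1 x

/-- A signature is affine if it is `λ · χ_{A(x,1)ᵀ = 0} · 𝔦^{Q(x)}` for a matrix `A`
over `ℤ₂` and a multilinear polynomial `Q` over `ℤ₄` of total degree at most 2
whose cross terms all have even coefficients. -/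
def IsAffine {ι : Type*} [Fintype ι] [DecidableEq ι] (f : (ι → ZMod 2) → ℂ) : Prop :=
  ∃ (lam : ℂ) (m : ℕ) (A : Matrix (Fin m) (Option ι) (ZMod 2))
    (c : Finset ι → ZMod 4),
    (∀ S : Finset ι, 2 < S.card → c S = 0) ∧
    (∀ S : Finset ι, S.card = 2 → ∃ t : ZMod 4, c S = 2 * t) ∧
    ∀ x : ι → ZMod 2,
      f x = lam * (if A.mulVec (extend1 x) = 0 then 1 else 0) * iPow (evalML4 c x)

/-- `f` has affine support of dimension `k`: its support is an affine subspace
of `ℤ₂ⁿ` (a coset of a linear subspace) of dimension `k`. -/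
def HasAffineSupportDim {ι : Type*} [Fintype ι] (f : (ι → ZMod 2) → ℂ) (k : ℕ) : Prop :=
  ∃ (x₀ : ι → ZMod 2) (V : Submodule (ZMod 2) (ι → ZMod 2)),
    Module.finrank (ZMod 2) ↥V = k ∧ {x | f x ≠ 0} = {x | x + x₀ ∈ V}

open Finset fwdDiff

theorem AffineMap.apply_add_eq {k V W : Type*} [Ring k] [AddCommGroup V] [Module k V]
    [AddCommGroup W] [Module k W] (ℓ : V →ᵃ[k] W) (x u : V) : ℓ (x + u) = ℓ x + ℓ.linear u := by
  rw [add_comm x u, ← vadd_eq_add, ℓ.map_vadd, vadd_eq_add, add_comm]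

theorem Pi.induction_on_zmod_two {ι : Type*} [DecidableEq ι] {P : (ι → ZMod 2) → Prop}
    (s : Finset ι) (h0 : P 0) (step : ∀ x, ∀ l ∈ s, x l = 0 → P x → P (x + Pi.single l 1))
    (x : ι → ZMod 2) (hx : ∀ j ∉ s, x j = 0) : P x := by
  induction s using Finset.induction_on generalizing x with
  | empty => simpa [show x = 0 from funext fun j => hx j (notMem_empty j)] using h0
  | insert l s hl ih =>
    have hx' : P (Function.update x l 0) := by
      refine ih (fun y j hj => step y j (mem_insert_of_mem hj)) _ fun j hj => ?_
      by_cases hjl : j = l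
      · simp [hjl]
      · simpa [hjl] using hx j (by simp [hjl, hj])
    obtain hxl | hxl := (by decide : ∀ a : ZMod 2, a = 0 ∨ a = 1) (x l)
    · rwa [← hxl, Function.update_eq_self] at hx'
    · convert step _ l (mem_insert_self l s) (by simp) hx' using 1
      ext j
      by_cases hjl : j = l <;> simp [hjl, hxl]

theorem Submodule.exists_linearEquiv_restrict_coords {K ι : Type*} [Field K] [Fintype ι]
    [DecidableEq ι] (V : Submodule K (ι → K)) {k : ℕ} (hk : Module.finrank K V = k) :
    ∃ (e : Fin k → ι) (ρ : V ≃ₗ[K] (Fin k → K)), ∀ v j, ρ v j = (v : ι → K) (e j) := by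
  let φ (i : ι) : Module.Dual K V := LinearMap.proj i ∘ₗ V.subtype
  have hspan : Submodule.span K (Set.range φ) = ⊤ := by
    refine eq_top_iff.mpr fun χ _ => ?_
    obtain ⟨ψ, rfl⟩ := LinearMap.dualMap_surjective_of_injective V.injective_subtype χ
    have hψ : V.subtype.dualMap ψ = ∑ i, ψ (fun j => if i = j then 1 else 0) • φ i := by
      ext v
      simp [φ, LinearMap.pi_apply_eq_sum_univ ψ (v : ι → K), mul_comm]
    rw [hψ]
    exact Submodule.sum_mem _ fun i _ => Submodule.smul_mem _ _ (Submodule.subset_span ⟨i, rfl⟩)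
  obtain ⟨κ, a, ha, hsp, hli⟩ := exists_linearIndependent' K φ
  have : Finite κ := Finite.of_injective a ha
  let b := Module.Basis.mk hli (by rw [hsp, hspan])
  let σ := b.indexEquiv (Module.finBasisOfFinrankEq K _ (by rw [Subspace.dual_finrank_eq, hk]))
  let ρ : V →ₗ[K] (Fin k → K) := LinearMap.pi fun j => φ (a (σ.symm j))
  have hρ : Function.Injective ρ := by
    rw [← LinearMap.ker_eq_bot, eq_bot_iff]
    intro v hv
    rw [Submodule.mem_bot, ← Module.eval_apply_eq_zero_iff K v]
    refine b.ext fun c => ?_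
    simpa [b, ρ] using congrFun (LinearMap.mem_ker.mp hv) (σ c)
  exact ⟨a ∘ σ.symm, LinearMap.linearEquivOfInjective ρ hρ (by simp [hk]), fun v j => rfl⟩

section InsertNth

variable {m : ℕ}

theorem Fin.insertNth_add_single {R : Type*} [AddCommMonoid R] (d : Fin (m + 1)) (b : R)
    (y : Fin m → R) (j : Fin m) (c : R) :
    d.insertNth b (y + Pi.single j c)
      = d.insertNth b y + Pi.single (M := fun _ => R) (d.succAbove j) c := by
  ext q
  refine Fin.succAboveCases d ?_ (fun p => ?_) q
  · simp [(Fin.succAbove_ne d j).symm]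
  · simp [Pi.single_apply]

theorem Fin.insertNth_add_single_self {R : Type*} [AddCommMonoid R] (d : Fin (m + 1)) (b : R)
    (y : Fin m → R) (c : R) :
    d.insertNth b y + Pi.single (M := fun _ => R) d c = d.insertNth (b + c) y := by
  ext q
  refine Fin.succAboveCases d ?_ (fun p => ?_) q
  · simp
  · simp [Fin.succAbove_ne d p]

def Fin.insertNthAffine {R : Type*} [Ring R] (j : Fin (m + 1)) (b : R) :
    (Fin m → R) →ᵃ[R] (Fin (m + 1) → R) where
  toFun := Fin.insertNth (α := fun _ => R) j b
  linear :=
    { toFun := Fin.insertNth (α := fun _ => R) j 0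
      map_add' y y' := by
        ext q
        refine Fin.succAboveCases j ?_ (fun p => ?_) q <;> simp
      map_smul' c y := by
        ext q
        refine Fin.succAboveCases j ?_ (fun p => ?_) q <;> simp }
  map_vadd' y v := by
    ext q
    refine Fin.succAboveCases j ?_ (fun p => ?_) q <;> simp

theorem Fin.exists_forall_succAbove_eq {s : Finset (Fin (m + 1))} (hs : s.card ≤ m) :
    ∃ d : Fin (m + 1), ∀ a ∈ s, ∃ a', d.succAbove a' = a := by
  obtain ⟨d, -, hd⟩ := exists_mem_notMem_of_card_lt_card (s := s) (t := univ)
    (by rw [card_univ, Fintype.card_fin]; omega)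
  exact ⟨d, fun a ha => Fin.exists_succAbove_eq (ne_of_mem_of_not_mem ha hd)⟩

theorem fwdDiff_comp_insertNth {R G : Type*} [AddCommMonoid R] [AddCommGroup G]
    (F : (Fin (m + 1) → R) → G) (d : Fin (m + 1)) (b : R) (j : Fin m) (c : R) :
    Δ_[Pi.single j c] (fun y => F (d.insertNth b y))
      = fun y => Δ_[Pi.single (M := fun _ => R) (d.succAbove j) c] F (d.insertNth b y) := by
  ext
  simp [fwdDiff, Fin.insertNth_add_single]

end InsertNth

section SecondDifferences

variable {ι M : Type*} [Fintype ι] [DecidableEq ι] [AddCommGroup M]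

theorem fwdDiff_single_eq_of_fwdDiff_fwdDiff_eq_zero {G : (ι → ZMod 2) → M}
    (hG : ∀ j l, j ≠ l → Δ_[Pi.single j 1] (Δ_[Pi.single l 1] G) = 0)
    {l : ι} {x : ι → ZMod 2} (hx : x l = 0) :
    Δ_[Pi.single l 1] G x = Δ_[Pi.single l 1] G 0 := by
  refine Pi.induction_on_zmod_two (P := fun x => Δ_[Pi.single l 1] G x = Δ_[Pi.single l 1] G 0)
    (univ.erase l) rfl (fun y j hj _ hy => ?_) x fun j hj => ?_
  · rw [← hy, ← sub_eq_zero]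
    exact congrFun (hG j l (ne_of_mem_erase hj)) y
  · rwa [of_not_not (mt (mem_erase_of_ne_of_mem · (mem_univ j)) hj)]

theorem eq_add_sum_of_fwdDiff_fwdDiff_eq_zero {G : (ι → ZMod 2) → M}
    (hG : ∀ j l, j ≠ l → Δ_[Pi.single j 1] (Δ_[Pi.single l 1] G) = 0) (x : ι → ZMod 2) :
    G x = G 0 + ∑ j, (x j).val • Δ_[Pi.single j 1] G 0 := by
  refine Pi.induction_on_zmod_two
    (P := fun x => G x = G 0 + ∑ j, (x j).val • Δ_[Pi.single j 1] G 0) univ (by simp)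
    (fun y l _ hyl hy => ?_) x fun j hj => absurd (mem_univ j) hj
  have hval (j : ι) : (y j + Pi.single (M := fun _ => ZMod 2) l 1 j).val
      = (y j).val + (Pi.single (M := fun _ => ZMod 2) l 1 j).val := by
    by_cases hjl : j = l
    · subst hjl
      simp [hyl]
    · simp [hjl]
  have hsingle : ∑ j, (Pi.single (M := fun _ => ZMod 2) l 1 j).val • Δ_[Pi.single j 1] G 0
      = Δ_[Pi.single l 1] G 0 := by
    rw [Fintype.sum_eq_single l fun j hj => by simp [hj], Pi.single_eq_same, ZMod.val_one,
      one_smul]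
  simp only [Pi.add_apply, hval, add_smul, sum_add_distrib]
  rw [hsingle, ← add_assoc, ← hy, ← fwdDiff_single_eq_of_fwdDiff_fwdDiff_eq_zero hG hyl]
  simp [fwdDiff]

end SecondDifferences

theorem iPow_add (r s : ZMod 4) : iPow (r + s) = iPow r * iPow s := by
  rw [iPow, iPow, iPow, ZMod.val_add, ← pow_add]
  conv_rhs => rw [← Nat.mod_add_div (r.val + s.val) 4, pow_add, pow_mul, Complex.I_pow_four,
    one_pow, mul_one]

theorem iPow_ne_zero (r : ZMod 4) : iPow r ≠ 0 := pow_ne_zero _ Complex.I_ne_zero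

theorem iPow_eq_one_iff {r : ZMod 4} : iPow r = 1 ↔ r = 0 := by
  obtain rfl | rfl | rfl | rfl : r = 0 ∨ r = 1 ∨ r = 2 ∨ r = 3 := by revert r; decide
  · simp [iPow]
  · exact iff_of_false (by change Complex.I ^ 1 ≠ 1; simp [Complex.ext_iff]) (by decide)
  · exact iff_of_false (by change Complex.I ^ 2 ≠ 1; norm_num) (by decide)
  · exact iff_of_false (by change Complex.I ^ 3 ≠ 1; simp [pow_succ, Complex.ext_iff]) (by decide)

theorem iPow_injective : Function.Injective iPow := fun r s h => by
  rw [← sub_add_cancel r s, iPow_add, mul_left_eq_self₀] at h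
  exact sub_eq_zero.mp (iPow_eq_one_iff.mp (h.resolve_right (iPow_ne_zero s)))

theorem sub_eq_sub_of_mul_iPow_eq {α : Type*} {a b : ℂ} (ha : a ≠ 0) {F G : α → ZMod 4}
    (h : ∀ y, a * iPow (F y) = b * iPow (G y)) (y z : α) : F y - G y = F z - G z := by
  have key : a * iPow (F y + G z) = a * iPow (F z + G y) :=
    calc a * iPow (F y + G z) = b * iPow (G y) * iPow (G z) := by rw [iPow_add, ← mul_assoc, h]
      _ = a * iPow (F z + G y) := by rw [iPow_add, ← mul_assoc, h z]; ring
  linear_combination iPow_injective (mul_left_cancel₀ ha key)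

theorem z2z4_add (a b : ZMod 2) : z2z4 (a + b) = z2z4 a + z2z4 b + 2 * (z2z4 a * z2z4 b) := by
  revert a b; decide

section QuadPhases

variable {ι : Type*} [Fintype ι] [DecidableEq ι]

def IsQuadCoeffs (c : Finset ι → ZMod 4) : Prop :=
  (∀ S : Finset ι, 2 < S.card → c S = 0) ∧ (∀ S : Finset ι, S.card = 2 → ∃ t, c S = 2 * t)

/-- The exponents `Q` allowed in `IsAffine`. -/
def quadPhases (ι : Type*) [Fintype ι] [DecidableEq ι] :
    Submodule (ZMod 4) ((ι → ZMod 2) → ZMod 4) where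
  carrier := {F | ∃ c, IsQuadCoeffs c ∧ evalML4 c = F}
  zero_mem' := ⟨0, ⟨fun _ _ => rfl, fun _ _ => ⟨0, by simp⟩⟩, by ext; simp [evalML4]⟩
  add_mem' := by
    rintro _ _ ⟨c, ⟨hc₁, hc₂⟩, rfl⟩ ⟨d, ⟨hd₁, hd₂⟩, rfl⟩
    refine ⟨c + d, ⟨fun S hS => by simp [hc₁ S hS, hd₁ S hS], fun S hS => ?_⟩, ?_⟩
    · obtain ⟨t, ht⟩ := hc₂ S hS
      obtain ⟨u, hu⟩ := hd₂ S hS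
      exact ⟨t + u, by simp [ht, hu, mul_add]⟩
    · ext; simp [evalML4, add_mul, sum_add_distrib]
  smul_mem' := by
    rintro r _ ⟨c, ⟨hc₁, hc₂⟩, rfl⟩
    refine ⟨r • c, ⟨fun S hS => by simp [hc₁ S hS], fun S hS => ?_⟩, ?_⟩
    · obtain ⟨t, ht⟩ := hc₂ S hS
      exact ⟨r * t, by simp [ht, mul_left_comm]⟩
    · ext; simp [evalML4, mul_sum, mul_assoc]

theorem evalML4_single (S : Finset ι) (r : ZMod 4) (x : ι → ZMod 2) :
    evalML4 (Pi.single S r) x = r * ∏ i ∈ S, z2z4 (x i) := by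
  rw [evalML4, Fintype.sum_eq_single S fun T hT => by simp [hT], Pi.single_eq_same]

theorem monomial_mem_quadPhases {S : Finset ι} {r : ZMod 4}
    (hS : S.card ≤ 1 ∨ S.card = 2 ∧ r = 2) :
    (fun x => r * ∏ i ∈ S, z2z4 (x i)) ∈ quadPhases ι := by
  refine ⟨Pi.single S r, ⟨fun T hT => ?_, fun T hT => ?_⟩, funext (evalML4_single S r)⟩
  · rw [Pi.single_eq_of_ne]
    rintro rfl
    omega
  · by_cases hTS : T = S
    · subst hTS
      exact ⟨1, by simp [hS.resolve_left (by omega)]⟩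
    · exact ⟨0, by simp [hTS]⟩

theorem const_mem_quadPhases (r : ZMod 4) : (fun _ => r) ∈ quadPhases ι := by
  simpa using monomial_mem_quadPhases (S := (∅ : Finset ι)) (r := r) (by simp)

theorem coord_mem_quadPhases (a : ι) : (fun x => z2z4 (x a)) ∈ quadPhases ι := by
  simpa using monomial_mem_quadPhases (S := {a}) (r := 1) (by simp)

theorem two_mul_coord_mul_coord_mem_quadPhases (a b : ι) :
    (fun x => 2 * (z2z4 (x a) * z2z4 (x b))) ∈ quadPhases ι := by
  by_cases hab : a = b
  · subst hab
    have hsq : ∀ p : ZMod 2, z2z4 p * z2z4 p = z2z4 p := by decide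
    simpa [hsq] using monomial_mem_quadPhases (S := {a}) (r := 2) (by simp)
  · simpa [hab] using monomial_mem_quadPhases (S := {a, b}) (r := 2) (by simp [hab])

theorem mul_coord_mul_coord_mem_quadPhases {c : ZMod 4} (hc : 2 * c = 0) (a b : ι) :
    (fun x => c * (z2z4 (x a) * z2z4 (x b))) ∈ quadPhases ι := by
  obtain rfl | rfl : c = 0 ∨ c = 2 := by revert c; decide
  · simp only [zero_mul]
    exact zero_mem _
  · exact two_mul_coord_mul_coord_mem_quadPhases a b

theorem two_mul_coord_mul_z2z4_sum_mem_quadPhases (a : ι) (w : ι → ZMod 2) (t : ZMod 2)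
    (s : Finset ι) :
    (fun x => 2 * (z2z4 (x a) * z2z4 (∑ b ∈ s, x b * w b + t))) ∈ quadPhases ι := by
  induction s using Finset.induction_on with
  | empty =>
    convert (quadPhases ι).smul_mem (2 * z2z4 t) (coord_mem_quadPhases a) using 1
    ext
    simp only [smul_eq_mul, Pi.smul_apply, sum_empty, zero_add]
    ring
  | insert b s hb ih =>
    have key : ∀ p q r u : ZMod 2, 2 * (z2z4 p * z2z4 (q * r + u))
        = z2z4 r * (2 * (z2z4 p * z2z4 q)) + 2 * (z2z4 p * z2z4 u) := by decide
    simp_rw [sum_insert hb, add_assoc, key]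
    exact add_mem ((quadPhases ι).smul_mem _ (two_mul_coord_mul_coord_mem_quadPhases a b)) ih

theorem z2z4_sum_mem_quadPhases (w : ι → ZMod 2) (t : ZMod 2) (s : Finset ι) :
    (fun x => z2z4 (∑ b ∈ s, x b * w b + t)) ∈ quadPhases ι := by
  induction s using Finset.induction_on with
  | empty => simpa using const_mem_quadPhases (z2z4 t)
  | insert b s hb ih =>
    have key : ∀ q r u : ZMod 2, z2z4 (q * r + u)
        = z2z4 r * z2z4 q + z2z4 u + z2z4 r * (2 * (z2z4 q * z2z4 u)) := by decide
    simp_rw [sum_insert hb, add_assoc, key]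
    exact add_mem (add_mem ((quadPhases ι).smul_mem _ (coord_mem_quadPhases b)) ih)
      ((quadPhases ι).smul_mem _ (two_mul_coord_mul_z2z4_sum_mem_quadPhases b w t s))

theorem z2z4_comp_mem_quadPhases (ℓ : (ι → ZMod 2) →ᵃ[ZMod 2] ZMod 2) :
    z2z4 ∘ ℓ ∈ quadPhases ι := by
  convert z2z4_sum_mem_quadPhases (fun b => ℓ.linear fun j => if b = j then 1 else 0) (ℓ 0) univ
    using 1
  ext x
  rw [Function.comp_apply, ℓ.decomp, Pi.add_apply, LinearMap.pi_apply_eq_sum_univ ℓ.linear x]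
  simp

/-- Since `2 xᵢ xⱼ = xᵢ + xⱼ - (xᵢ ⊕ xⱼ)` over `ℤ₄`, the quadratic phases are spanned by lifts of
affine `ℤ₂`-functionals, so closure under affine substitution and the finite-difference identities
can be checked on these generators. -/
theorem quadPhases_eq_span : quadPhases ι =
    Submodule.span (ZMod 4) (Set.range fun ℓ : (ι → ZMod 2) →ᵃ[ZMod 2] ZMod 2 => z2z4 ∘ ℓ) := by
  refine le_antisymm ?_ (Submodule.span_le.mpr (Set.range_subset_iff.mpr z2z4_comp_mem_quadPhases))
  rintro _ ⟨c, ⟨hc₁, hc₂⟩, rfl⟩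
  have hgen (ℓ : (ι → ZMod 2) →ᵃ[ZMod 2] ZMod 2) : z2z4 ∘ ℓ ∈ Submodule.span (ZMod 4)
      (Set.range fun ℓ : (ι → ZMod 2) →ᵃ[ZMod 2] ZMod 2 => z2z4 ∘ ℓ) :=
    Submodule.subset_span ⟨ℓ, rfl⟩
  rw [show evalML4 c = ∑ S, c S • fun x => ∏ i ∈ S, z2z4 (x i) by ext; simp [evalML4]]
  refine Submodule.sum_mem _ fun S _ => ?_
  obtain hS | hS | hS | hS : S.card = 0 ∨ S.card = 1 ∨ S.card = 2 ∨ 2 < S.card := by omega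
  · obtain rfl := card_eq_zero.mp hS
    convert Submodule.smul_mem _ (c ∅) (hgen (AffineMap.const (ZMod 2) _ 1)) using 2
    ext
    rfl
  · obtain ⟨a, rfl⟩ := card_eq_one.mp hS
    convert Submodule.smul_mem _ (c {a}) (hgen (LinearMap.proj a).toAffineMap) using 2
    ext
    simp
  · obtain ⟨t, ht⟩ := hc₂ S hS
    obtain ⟨a, b, hab, rfl⟩ := card_eq_two.mp hS
    let π (i : ι) : (ι → ZMod 2) →ₗ[ZMod 2] ZMod 2 := LinearMap.proj i
    convert Submodule.smul_mem _ t (sub_mem (hgen (π a + π b).toAffineMap)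
      (add_mem (hgen (π a).toAffineMap) (hgen (π b).toAffineMap))) using 1
    ext x
    simp [π, ht, hab, z2z4_add]
    ring
  · simp [hc₁ S hS]

theorem comp_mem_quadPhases {κ : Type*} [Fintype κ] [DecidableEq κ]
    {F : (κ → ZMod 2) → ZMod 4} (hF : F ∈ quadPhases κ)
    (τ : (ι → ZMod 2) →ᵃ[ZMod 2] (κ → ZMod 2)) : F ∘ τ ∈ quadPhases ι := by
  suffices quadPhases κ ≤ (quadPhases ι).comap (LinearMap.funLeft (ZMod 4) (ZMod 4) τ) from
    this hF
  rw [quadPhases_eq_span (ι := κ), Submodule.span_le]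
  rintro _ ⟨ℓ, rfl⟩
  rw [SetLike.mem_coe, Submodule.mem_comap, quadPhases_eq_span]
  exact Submodule.subset_span ⟨ℓ.comp τ, rfl⟩

theorem two_mul_fwdDiff_fwdDiff_eq_zero {F : (ι → ZMod 2) → ZMod 4} (hF : F ∈ quadPhases ι)
    (u v x : ι → ZMod 2) : 2 * Δ_[u] (Δ_[v] F) x = 0 := by
  rw [quadPhases_eq_span] at hF
  induction hF using Submodule.span_induction generalizing x with
  | mem _ hF =>
    obtain ⟨ℓ, rfl⟩ := hF
    have key : ∀ p α β : ZMod 2,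
        2 * (z2z4 (p + α + β) - z2z4 (p + α) - (z2z4 (p + β) - z2z4 p)) = 0 := by decide
    simpa [fwdDiff, AffineMap.apply_add_eq, add_right_comm] using
      key (ℓ x) (ℓ.linear u) (ℓ.linear v)
  | zero => simp [fwdDiff]
  | add F G _ _ hF hG => simp [mul_add, hF, hG]
  | smul r F _ hF => simp [mul_left_comm, hF]

theorem fwdDiff_fwdDiff_fwdDiff_eq_zero {F : (ι → ZMod 2) → ZMod 4} (hF : F ∈ quadPhases ι)
    (u v w : ι → ZMod 2) : Δ_[u] (Δ_[v] (Δ_[w] F)) = 0 := by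
  rw [quadPhases_eq_span] at hF
  induction hF using Submodule.span_induction with
  | mem _ hF =>
    obtain ⟨ℓ, rfl⟩ := hF
    have key : ∀ p α β γ : ZMod 2,
        z2z4 (p + α + β + γ) - z2z4 (p + α + β) - (z2z4 (p + α + γ) - z2z4 (p + α))
          - (z2z4 (p + β + γ) - z2z4 (p + β) - (z2z4 (p + γ) - z2z4 p)) = 0 := by decide
    ext x
    simpa [fwdDiff, AffineMap.apply_add_eq, add_right_comm] using
      key (ℓ x) (ℓ.linear u) (ℓ.linear v) (ℓ.linear w)
  | zero => ext; simp [fwdDiff]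
  | add F G _ _ hF hG => simp [hF, hG]
  | smul r F _ hF => simp [hF]

end QuadPhases

section PinnedPhases

theorem eq_add_z2z4_mul_fwdDiff {m : ℕ} (F : (Fin (m + 1) → ZMod 2) → ZMod 4) (d : Fin (m + 1))
    (x : Fin (m + 1) → ZMod 2) :
    F x = F (d.insertNth 0 (d.removeNth x))
      + z2z4 (x d) * Δ_[Pi.single d 1] F (d.insertNth 0 (d.removeNth x)) := by
  conv_lhs => rw [← Fin.insertNth_self_removeNth d x]
  obtain hx | hx := (by decide : ∀ a : ZMod 2, a = 0 ∨ a = 1) (x d)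
  · simp [hx, show z2z4 0 = 0 from rfl]
  · rw [hx, fwdDiff, Fin.insertNth_add_single_self, zero_add, show z2z4 1 = 1 from rfl, one_mul,
      add_sub_cancel]

variable {m : ℕ} {P : (Fin (m + 1) → ZMod 2) → ZMod 4}
  (hP : ∀ (d : Fin (m + 1)) (b : ZMod 2), (fun y => P (d.insertNth b y)) ∈ quadPhases (Fin m))
include hP

theorem two_mul_fwdDiff_single_fwdDiff_single_eq_zero_of_pinnings (hm : 2 ≤ m)
    (a b : Fin (m + 1)) (x : Fin (m + 1) → ZMod 2) :
    2 * Δ_[Pi.single a 1] (Δ_[Pi.single b 1] P) x = 0 := by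
  obtain ⟨d, hd⟩ := Fin.exists_forall_succAbove_eq (s := {a, b}) (card_le_two.trans (by omega))
  obtain ⟨a, rfl⟩ := hd a (by simp)
  obtain ⟨b, rfl⟩ := hd b (by simp)
  have h := two_mul_fwdDiff_fwdDiff_eq_zero (hP d (x d)) (Pi.single a 1) (Pi.single b 1)
    (d.removeNth x)
  simpa only [fwdDiff_comp_insertNth, Fin.insertNth_self_removeNth] using h

theorem fwdDiff_single_fwdDiff_single_fwdDiff_single_eq_zero_of_pinnings (hm : 3 ≤ m)
    (a b p : Fin (m + 1)) : Δ_[Pi.single a 1] (Δ_[Pi.single b 1] (Δ_[Pi.single p 1] P)) = 0 := by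
  obtain ⟨d, hd⟩ := Fin.exists_forall_succAbove_eq (s := {a, b, p})
    (card_le_three.trans (by omega))
  obtain ⟨a, rfl⟩ := hd a (by simp)
  obtain ⟨b, rfl⟩ := hd b (by simp)
  obtain ⟨p, rfl⟩ := hd p (by simp)
  ext x
  have h := congrFun (fwdDiff_fwdDiff_fwdDiff_eq_zero (hP d (x d)) (Pi.single a 1)
    (Pi.single b 1) (Pi.single p 1)) (d.removeNth x)
  simpa only [fwdDiff_comp_insertNth, Fin.insertNth_self_removeNth, Pi.zero_apply] using h

theorem mem_quadPhases_of_pinnings (hm : 3 ≤ m) : P ∈ quadPhases (Fin (m + 1)) := by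
  -- `P x = P (0, x') + x 0 · D x'`, where the third differences of `P` make `D` affine and
  -- its second differences make the linear part of `D` even.
  set D : (Fin m → ZMod 2) → ZMod 4 :=
    fun y => Δ_[Pi.single 0 1] P ((0 : Fin (m + 1)).insertNth 0 y) with hD
  have hD2 (j l : Fin m) : Δ_[Pi.single j 1] (Δ_[Pi.single l 1] D) = 0 := by
    ext y
    simpa only [hD, fwdDiff_comp_insertNth, Pi.zero_apply] using
      congrFun (fwdDiff_single_fwdDiff_single_fwdDiff_single_eq_zero_of_pinnings hP hm _ _ 0)
        ((0 : Fin (m + 1)).insertNth 0 y)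
  have hc (j : Fin m) : 2 * Δ_[Pi.single j 1] D 0 = 0 := by
    simpa only [hD, fwdDiff_comp_insertNth] using
      two_mul_fwdDiff_single_fwdDiff_single_eq_zero_of_pinnings hP (by omega) _ 0 _
  have hsplit : P = (fun x => P ((0 : Fin (m + 1)).insertNth 0 ((0 : Fin (m + 1)).removeNth x)))
      + D 0 • (fun x => z2z4 (x 0))
      + ∑ j, fun x => Δ_[Pi.single j 1] D 0
          * (z2z4 (x 0) * z2z4 (x ((0 : Fin (m + 1)).succAbove j))) := by
    ext x
    rw [eq_add_z2z4_mul_fwdDiff P 0 x]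
    simp only [Pi.add_apply, Pi.smul_apply, Finset.sum_apply, smul_eq_mul]
    change _ + _ * D ((0 : Fin (m + 1)).removeNth x) = _
    rw [eq_add_sum_of_fwdDiff_fwdDiff_eq_zero (fun j l _ => hD2 j l), mul_add, mul_sum, add_assoc,
      mul_comm (z2z4 (x 0))]
    refine congrArg _ (congrArg _ (sum_congr rfl fun j _ => ?_))
    change z2z4 (x 0) * ((x (Fin.succAbove 0 j)).val • _) = _
    rw [nsmul_eq_mul]
    unfold z2z4
    ring
  rw [hsplit]
  refine add_mem (add_mem ?_ ((quadPhases _).smul_mem _ (coord_mem_quadPhases 0)))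
    (sum_mem fun j _ => mul_coord_mul_coord_mem_quadPhases (hc j) _ _)
  exact comp_mem_quadPhases (hP 0 0)
    (LinearMap.funLeft (ZMod 2) (ZMod 2) (Fin.succAbove 0)).toAffineMap

end PinnedPhases

section Signatures

variable {ι : Type*} [Fintype ι] [DecidableEq ι]

theorem isAffine_iff {f : (ι → ZMod 2) → ℂ} :
    IsAffine f ↔ ∃ (lam : ℂ) (m : ℕ) (A : Matrix (Fin m) (Option ι) (ZMod 2)),
      ∃ F ∈ quadPhases ι,
        ∀ x, f x = lam * (if A.mulVec (extend1 x) = 0 then 1 else 0) * iPow (F x) := by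
  constructor
  · rintro ⟨lam, m, A, c, hc₁, hc₂, hf⟩
    exact ⟨lam, m, A, _, ⟨c, ⟨hc₁, hc₂⟩, rfl⟩, hf⟩
  · rintro ⟨lam, m, A, _, ⟨c, ⟨hc₁, hc₂⟩, rfl⟩, hf⟩
    exact ⟨lam, m, A, c, hc₁, hc₂, hf⟩

theorem IsAffine.exists_quadPhase_of_ne_zero {f : (ι → ZMod 2) → ℂ} (hf : IsAffine f)
    (hne : ∀ x, f x ≠ 0) : ∃ lam, ∃ F ∈ quadPhases ι, ∀ x, f x = lam * iPow (F x) := by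
  obtain ⟨lam, m, A, F, hF, hf⟩ := isAffine_iff.mp hf
  refine ⟨lam, F, hF, fun x => ?_⟩
  have hx := hne x
  rw [hf x] at hx ⊢
  split_ifs at hx ⊢ <;> simp_all

theorem exists_mulVec_extend1_eq {κ : Type*} (L : (ι → ZMod 2) →ₗ[ZMod 2] (κ → ZMod 2))
    (t : κ → ZMod 2) :
    ∃ A : Matrix κ (Option ι) (ZMod 2), ∀ x, A.mulVec (extend1 x) = L x + t := by
  refine ⟨Matrix.of fun i o => o.elim (t i) fun j => LinearMap.toMatrix' L i j, fun x => ?_⟩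
  ext i
  conv_rhs => rw [← LinearMap.toMatrix'_mulVec L x]
  simp only [Matrix.mulVec, dotProduct, Fintype.sum_option, extend1, Matrix.of_apply,
    Option.elim_none, Option.elim_some, mul_one, Pi.add_apply, add_comm]

theorem IsAffine.comp_affineMap {κ : Type*} [Fintype κ] [DecidableEq κ] {f : (κ → ZMod 2) → ℂ}
    (hf : IsAffine f) (τ : (ι → ZMod 2) →ᵃ[ZMod 2] (κ → ZMod 2)) : IsAffine (f ∘ τ) := by
  obtain ⟨lam, m, A, F, hF, hf⟩ := isAffine_iff.mp hf
  obtain ⟨E, hE⟩ := exists_mulVec_extend1_eq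
    (LinearMap.pi fun o : Option κ => o.elim 0 fun a => LinearMap.proj a ∘ₗ τ.linear)
    (extend1 (τ 0))
  have hτ (x : ι → ZMod 2) : E.mulVec (extend1 x) = extend1 (τ x) := by
    rw [hE]
    ext (_ | a)
    · simp [extend1]
    · conv_rhs => rw [τ.decomp]
      simp [extend1]
  exact isAffine_iff.mpr ⟨lam, m, A * E, F ∘ τ, comp_mem_quadPhases hF τ,
    fun x => by simp [hf, ← Matrix.mulVec_mulVec, hτ]⟩

theorem isAffine_of_phase_on_coset {f : (ι → ZMod 2) → ℂ} {V : Submodule (ZMod 2) (ι → ZMod 2)}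
    {x₀ : ι → ZMod 2} (hsupp : ∀ x, x + x₀ ∉ V → f x = 0) {lam : ℂ}
    {F : (ι → ZMod 2) → ZMod 4} (hF : F ∈ quadPhases ι)
    (hf : ∀ x, x + x₀ ∈ V → f x = lam * iPow (F x)) : IsAffine f := by
  let L := (Module.finBasis (ZMod 2) ((ι → ZMod 2) ⧸ V)).equivFun.toLinearMap ∘ₗ V.mkQ
  obtain ⟨A, hA⟩ := exists_mulVec_extend1_eq L (L x₀)
  refine isAffine_iff.mpr ⟨lam, _, A, F, hF, fun x => ?_⟩
  have hAV : A.mulVec (extend1 x) = 0 ↔ x + x₀ ∈ V := by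
    rw [hA, ← map_add]
    simp only [L, LinearMap.comp_apply, LinearEquiv.coe_coe, LinearEquiv.map_eq_zero_iff,
      Submodule.mkQ_apply, Submodule.Quotient.mk_eq_zero]
  by_cases hx : x + x₀ ∈ V
  · rw [if_pos (hAV.mpr hx), hf x hx, mul_one]
  · rw [hsupp x hx, if_neg (mt hAV.mp hx), mul_zero, zero_mul]

end Signatures

theorem isAffine_comp_insertNth_of_apply_eq {n m : ℕ} {f : (Fin (n + 1) → ZMod 2) → ℂ}
    (hpin : ∀ (i : Fin (n + 1)) (b : ZMod 2),
      IsAffine fun y : Fin n → ZMod 2 => f (i.insertNth b y))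
    (σ : (Fin (m + 1) → ZMod 2) →ᵃ[ZMod 2] (Fin (n + 1) → ZMod 2))
    {e : Fin (m + 1) → Fin (n + 1)} {c : Fin (m + 1) → ZMod 2}
    (hσ : ∀ y j, σ y (e j) = y j + c j) (j : Fin (m + 1)) (b : ZMod 2) :
    IsAffine fun y : Fin m → ZMod 2 => f (σ (j.insertNth b y)) := by
  let T := (LinearMap.funLeft (ZMod 2) (ZMod 2) (e j).succAbove).toAffineMap.comp
    (σ.comp (Fin.insertNthAffine j b))
  convert (hpin (e j) (b + c j)).comp_affineMap T using 1
  ext y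
  conv_lhs => rw [← Fin.insertNth_self_removeNth (e j) (σ (j.insertNth b y)), hσ,
    Fin.insertNth_apply_same]
  rfl

theorem exists_quadPhase_of_pinnings {m : ℕ} (hm : 3 ≤ m) {g : (Fin (m + 1) → ZMod 2) → ℂ}
    (hg : ∀ x, g x ≠ 0) (hpin : ∀ (d : Fin (m + 1)) (b : ZMod 2),
      IsAffine fun y : Fin m → ZMod 2 => g (d.insertNth b y)) :
    ∃ P ∈ quadPhases (Fin (m + 1)), ∀ x, g x = g 0 * iPow (P x) := by
  choose lam Q hQ hgQ using fun d b => (hpin d b).exists_quadPhase_of_ne_zero fun _ => hg _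
  have hrel (x x' : Fin (m + 1) → ZMod 2) (d : Fin (m + 1)) (hd : x d = x' d) :
      ∃ r, g x' = g x * iPow r := by
    refine ⟨Q d (x d) (d.removeNth x') - Q d (x d) (d.removeNth x), ?_⟩
    calc g x' = lam d (x d) * iPow (Q d (x d) (d.removeNth x')) := by
          rw [← hgQ, hd, Fin.insertNth_self_removeNth]
      _ = g x * iPow (Q d (x d) (d.removeNth x') - Q d (x d) (d.removeNth x)) := by
          rw [← Fin.insertNth_self_removeNth d x, hgQ, Fin.insertNth_apply_same,
            Fin.removeNth_insertNth, mul_assoc, ← iPow_add, add_sub_cancel]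
  -- `Pi.single 0 (x 0)` shares coordinate `0` with `x` and coordinate `1` with `0`.
  have hphase (x : Fin (m + 1) → ZMod 2) : ∃ r, g x = g 0 * iPow r := by
    obtain ⟨r, hr⟩ := hrel 0 (Pi.single 0 (x 0)) ⟨1, by omega⟩ (by simp [Fin.ext_iff])
    obtain ⟨s, hs⟩ := hrel (Pi.single 0 (x 0)) x 0 (by simp)
    exact ⟨r + s, by rw [hs, hr, mul_assoc, iPow_add]⟩
  choose P hP using hphase
  refine ⟨P, mem_quadPhases_of_pinnings (fun d b => ?_) hm, hP⟩
  have hPQ := sub_eq_sub_of_mul_iPow_eq (hg 0) (F := fun y => P (d.insertNth b y)) (G := Q d b)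
    fun y => (hP _).symm.trans (hgQ d b y)
  convert add_mem (hQ d b) (const_mem_quadPhases (P (d.insertNth b 0) - Q d b 0)) using 1
  ext y
  rw [Pi.add_apply]
  linear_combination hPQ y 0

theorem affine_of_pinnings_affine (n k : ℕ) (hk : 4 ≤ k)
    (f : (Fin (n + 1) → ZMod 2) → ℂ)
    (hsupp : HasAffineSupportDim f k)
    (hpin : ∀ (i : Fin (n + 1)) (b : ZMod 2),
      IsAffine fun y : Fin n → ZMod 2 => f (i.insertNth b y)) :
    IsAffine f := by
  obtain ⟨x₀, V, hdim, hsupp⟩ := hsupp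
  have hV (x : Fin (n + 1) → ZMod 2) : f x ≠ 0 ↔ x + x₀ ∈ V := Set.ext_iff.mp hsupp x
  have hx₀ (x : Fin (n + 1) → ZMod 2) : x + x₀ + x₀ = x := by
    ext i
    simp [add_assoc, CharTwo.add_self_eq_zero]
  obtain ⟨m, rfl⟩ : ∃ m, k = m + 1 := ⟨k - 1, by omega⟩
  obtain ⟨e, ρ, hρ⟩ := V.exists_linearEquiv_restrict_coords hdim
  -- `σ` parametrises the support by the coordinates `e`, and `τ` inverts it there.
  let σ : (Fin (m + 1) → ZMod 2) →ᵃ[ZMod 2] (Fin (n + 1) → ZMod 2) :=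
    (V.subtype ∘ₗ ρ.symm.toLinearMap).toAffineMap + AffineMap.const (ZMod 2) _ x₀
  let τ : (Fin (n + 1) → ZMod 2) →ᵃ[ZMod 2] (Fin (m + 1) → ZMod 2) :=
    (LinearMap.funLeft (ZMod 2) (ZMod 2) e).toAffineMap + AffineMap.const (ZMod 2) _ (x₀ ∘ e)
  have hσe (y : Fin (m + 1) → ZMod 2) (j : Fin (m + 1)) : σ y (e j) = y j + x₀ (e j) := by
    simp [σ, ← hρ]
  obtain ⟨P, hP, hfP⟩ := exists_quadPhase_of_pinnings (g := f ∘ σ) (by omega)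
    (fun y => (hV _).mpr (by simp [σ, hx₀])) (isAffine_comp_insertNth_of_apply_eq hpin σ hσe)
  refine isAffine_of_phase_on_coset (lam := f (σ 0)) (fun x hx => not_not.mp (mt (hV x).mp hx))
    (comp_mem_quadPhases hP τ) fun x hx => ?_
  have hτ : τ x = ρ ⟨x + x₀, hx⟩ := by
    ext j
    simp [τ, hρ]
  have hστ : σ (τ x) = x := by simp [σ, hτ, hx₀]
  exact (congrArg f hστ).symm.trans (hfP (τ x))
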